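/- Let 𝒞 be a finite set of constructive ◇-free formulas and G = CK_□+𝒞, where CK_□ is LJ extended by the rule K_□. Suppose either every G-provable sequent is valid in the irreflexive node frame 𝒦ᵢ, or every G-provable sequent is valid in the reflexive node frame 𝒦ᵣ and G proves (⇒ □p → p). Then G has the Visser–Harrop property: whenever G proves Γ, {A_i → B_i}_{i∈I} ⇒ C ∨ D, where Γ is a finite multiset of Harrop ◇-free formulas and I is a finite (possibly empty) index set of ◇-free implications, then G proves Γ, {A_i → B_i}_{i∈I} ⇒ C, or Γ, {A_i → B_i}_{i∈I} ⇒ D, or Γ, {A_i → B_i}_{i∈I} ⇒ A_i for some i ∈ I. -/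

import Mathlib

set_option autoImplicit false

namespace UPT

/-- Modal formulas over atoms of type `α` (the language `ℒ = {∧,∨,→,⊤,⊥,□,◇}`). -/
inductive Fml (α : Type) : Type where
  | atom : α → Fml α
  | top  : Fml α
  | bot  : Fml α
  | and  : Fml α → Fml α → Fml α
  | or   : Fml α → Fml α → Fml α
  | imp  : Fml α → Fml α → Fml α
  | box  : Fml α → Fml α
  | dia  : Fml α → Fml α
deriving DecidableEq

variable {α β : Type}

/-- Simultaneous substitution of formulas for atoms. -/
def Fml.subst (σ : β → Fml α) : Fml β → Fml α
  | .atom b  => σ b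
  | .top     => .top
  | .bot     => .bot
  | .and A B => .and (A.subst σ) (B.subst σ)
  | .or A B  => .or (A.subst σ) (B.subst σ)
  | .imp A B => .imp (A.subst σ) (B.subst σ)
  | .box A   => .box (A.subst σ)
  | .dia A   => .dia (A.subst σ)

/-- A sequent: a finite multiset antecedent together with a succedent
containing at most one formula. -/
abbrev Seq (α : Type) : Type := Multiset (Fml α) × Option (Fml α)

/-- A rule set relates a (finite) list of premise sequents to a conclusion sequent. -/
abbrev RuleSet (α : Type) : Type := List (Seq α) → Seq α → Prop

/-- The axioms and rules of the single-conclusion sequent calculus `LJ`, stated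
schematically: they are closed under substituting arbitrary formulas for atoms
and arbitrary multisets (resp. succedents) for the context variables. -/
inductive LJRule : List (Seq α) → Seq α → Prop where
  | id (Γ : Multiset (Fml α)) (A : Fml α) : LJRule [] (A ::ₘ Γ, some A)
  | botL (Γ : Multiset (Fml α)) (Δ : Option (Fml α)) : LJRule [] (.bot ::ₘ Γ, Δ)
  | topR (Γ : Multiset (Fml α)) : LJRule [] (Γ, some .top)
  | wL (A : Fml α) (Γ : Multiset (Fml α)) (Δ : Option (Fml α)) :
      LJRule [(Γ, Δ)] (A ::ₘ Γ, Δ)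
  | wR (A : Fml α) (Γ : Multiset (Fml α)) : LJRule [(Γ, none)] (Γ, some A)
  | cL (A : Fml α) (Γ : Multiset (Fml α)) (Δ : Option (Fml α)) :
      LJRule [(A ::ₘ A ::ₘ Γ, Δ)] (A ::ₘ Γ, Δ)
  | cut (A : Fml α) (Γ : Multiset (Fml α)) (Δ : Option (Fml α)) :
      LJRule [(Γ, some A), (A ::ₘ Γ, Δ)] (Γ, Δ)
  | andL₁ (A B : Fml α) (Γ : Multiset (Fml α)) (Δ : Option (Fml α)) :
      LJRule [(A ::ₘ Γ, Δ)] (.and A B ::ₘ Γ, Δ)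
  | andL₂ (A B : Fml α) (Γ : Multiset (Fml α)) (Δ : Option (Fml α)) :
      LJRule [(B ::ₘ Γ, Δ)] (.and A B ::ₘ Γ, Δ)
  | andR (A B : Fml α) (Γ : Multiset (Fml α)) :
      LJRule [(Γ, some A), (Γ, some B)] (Γ, some (.and A B))
  | orL (A B : Fml α) (Γ : Multiset (Fml α)) (Δ : Option (Fml α)) :
      LJRule [(A ::ₘ Γ, Δ), (B ::ₘ Γ, Δ)] (.or A B ::ₘ Γ, Δ)
  | orR₁ (A B : Fml α) (Γ : Multiset (Fml α)) : LJRule [(Γ, some A)] (Γ, some (.or A B))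
  | orR₂ (A B : Fml α) (Γ : Multiset (Fml α)) : LJRule [(Γ, some B)] (Γ, some (.or A B))
  | impL (A B : Fml α) (Γ : Multiset (Fml α)) (Δ : Option (Fml α)) :
      LJRule [(Γ, some A), (B ::ₘ Γ, Δ)] (.imp A B ::ₘ Γ, Δ)
  | impR (A B : Fml α) (Γ : Multiset (Fml α)) :
      LJRule [(A ::ₘ Γ, some B)] (Γ, some (.imp A B))

/-- The rule `K_□`: from `Γ ⇒ A` infer `□Γ ⇒ □A`. -/
inductive KBoxRule : List (Seq α) → Seq α → Prop where
  | mk (Γ : Multiset (Fml α)) (A : Fml α) :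
      KBoxRule [(Γ, some A)] (Γ.map Fml.box, some (.box A))

/-- The rule `K_◇`: from `Γ, A ⇒ B` infer `□Γ, ◇A ⇒ ◇B`. -/
inductive KDiaRule : List (Seq α) → Seq α → Prop where
  | mk (Γ : Multiset (Fml α)) (A B : Fml α) :
      KDiaRule [(A ::ₘ Γ, some B)] (.dia A ::ₘ Γ.map Fml.box, some (.dia B))

/-- The rule `◇L`: from `Γ, A ⇒ B` infer `Γ, ◇A ⇒ ◇B`. -/
inductive DiaLRule : List (Seq α) → Seq α → Prop where
  | mk (Γ : Multiset (Fml α)) (A B : Fml α) :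
      DiaLRule [(A ::ₘ Γ, some B)] (.dia A ::ₘ Γ, some (.dia B))

/-- Adding a set `Ax` of axioms to a calculus: the initial sequents `⇒ σ(A)`
for every substitution instance `σ(A)` of every `A ∈ Ax`. -/
def axRule (Ax : Fml α → Prop) : RuleSet α := fun ps c =>
  ps = [] ∧ ∃ (A : Fml α) (σ : α → Fml α), Ax A ∧ c = ((0 : Multiset (Fml α)), some (A.subst σ))

/-- Using a set of sequents as additional initial sequents (assumptions). -/
def hypRule (H : Set (Seq α)) : RuleSet α := fun ps c => ps = [] ∧ c ∈ H

/-- The sequent calculus `LJ+Ax`. -/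
def LJSys (Ax : Fml α → Prop) : RuleSet α := fun ps c => LJRule ps c ∨ axRule Ax ps c

/-- The sequent calculus `CK+Ax = LJ + K_□ + K_◇ + Ax`. -/
def CKSys (Ax : Fml α → Prop) : RuleSet α := fun ps c =>
  LJRule ps c ∨ KBoxRule ps c ∨ KDiaRule ps c ∨ axRule Ax ps c

/-- The sequent calculus `CK_□+Ax = LJ + K_□ + Ax`. -/
def CKBoxSys (Ax : Fml α → Prop) : RuleSet α := fun ps c =>
  LJRule ps c ∨ KBoxRule ps c ∨ axRule Ax ps c

/-- The sequent calculus `BLL+Ax = LJ + ◇L + Ax`. -/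
def BLLSys (Ax : Fml α → Prop) : RuleSet α := fun ps c =>
  LJRule ps c ∨ DiaLRule ps c ∨ axRule Ax ps c

/-- Provability of a sequent in the calculus generated by a rule set. -/
inductive Derives (R : RuleSet α) : Multiset (Fml α) → Option (Fml α) → Prop where
  | step {ps : List (Seq α)} {c : Seq α} (hr : R ps c)
      (hp : ∀ p ∈ ps, Derives R p.1 p.2) : Derives R c.1 c.2

/-- Basic formulas: generated from atoms, `⊤`, `⊥` by `∧`, `∨`, `◇`. -/
inductive Basic : Fml α → Prop where
  | atom (a : α) : Basic (.atom a)
  | top : Basic (.top : Fml α)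
  | bot : Basic (.bot : Fml α)
  | and {A B : Fml α} : Basic A → Basic B → Basic (.and A B)
  | or {A B : Fml α} : Basic A → Basic B → Basic (.or A B)
  | dia {A : Fml α} : Basic A → Basic (.dia A)

/-- Almost positive formulas: generated from basic formulas by `∧`, `∨`, `□`, `◇`
and implications `A → B` with `A` basic and `B` almost positive. -/
inductive AlmostPos : Fml α → Prop where
  | basic {A : Fml α} : Basic A → AlmostPos A
  | and {A B : Fml α} : AlmostPos A → AlmostPos B → AlmostPos (.and A B)
  | or {A B : Fml α} : AlmostPos A → AlmostPos B → AlmostPos (.or A B)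
  | box {A : Fml α} : AlmostPos A → AlmostPos (.box A)
  | dia {A : Fml α} : AlmostPos A → AlmostPos (.dia A)
  | imp {A B : Fml α} : Basic A → AlmostPos B → AlmostPos (.imp A B)

/-- Constructive formulas: generated from basic formulas by `∧`, `□` and
implications `A → B` with `A` almost positive and `B` constructive. -/
inductive Constructive : Fml α → Prop where
  | basic {A : Fml α} : Basic A → Constructive A
  | and {A B : Fml α} : Constructive A → Constructive B → Constructive (.and A B)
  | box {A : Fml α} : Constructive A → Constructive (.box A)
  | imp {A B : Fml α} : AlmostPos A → Constructive B → Constructive (.imp A B)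

/-- Harrop formulas: atoms, `⊥`, `⊤`, closed under `∧`, `□`, and implications
`A → B` with `A` arbitrary and `B` Harrop. -/
inductive Harrop : Fml α → Prop where
  | atom (a : α) : Harrop (.atom a)
  | top : Harrop (.top : Fml α)
  | bot : Harrop (.bot : Fml α)
  | and {A B : Fml α} : Harrop A → Harrop B → Harrop (.and A B)
  | box {A : Fml α} : Harrop A → Harrop (.box A)
  | imp (A : Fml α) {B : Fml α} : Harrop B → Harrop (.imp A B)

/-- Conjunction of a list of formulas (`⋀∅ = ⊤`). -/
def conj : List (Fml α) → Fml α
  | [] => .top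
  | [A] => A
  | A :: B :: l => .and A (conj (B :: l))

/-- Disjunction of a list of formulas (`⋁∅ = ⊥`). -/
def disj : List (Fml α) → Fml α
  | [] => .bot
  | [A] => A
  | A :: B :: l => .or A (disj (B :: l))

/-- Disjunction of a succedent (at most one formula; `⋁∅ = ⊥`). -/
def odisj : Option (Fml α) → Fml α
  | none => .bot
  | some A => A

/-- The multiset `{A_i → B_i}_{i ∈ I}` of implications of an indexed family. -/
def imps (AB : List (Fml α × Fml α)) : Multiset (Fml α) :=
  ↑(AB.map fun p => Fml.imp p.1 p.2)

/-- The conjunction `⋀_{i∈I} (A_i → B_i)` of an indexed family of implications. -/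
def impConj (AB : List (Fml α × Fml α)) : Fml α :=
  conj (AB.map fun p => Fml.imp p.1 p.2)

/-- Truth in the one-node *irreflexive* frame `𝒦ᵢ` under a Boolean valuation:
`□A` is always true and `◇A` is always false; the propositional connectives
are evaluated classically. -/
def evalI (v : α → Bool) : Fml α → Bool
  | .atom a  => v a
  | .top     => true
  | .bot     => false
  | .and A B => evalI v A && evalI v B
  | .or A B  => evalI v A || evalI v B
  | .imp A B => !evalI v A || evalI v B
  | .box _   => true
  | .dia _   => false

/-- Truth in the one-node *reflexive* frame `𝒦ᵣ` under a Boolean valuation: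
`□A` and `◇A` take the value of `A`. -/
def evalR (v : α → Bool) : Fml α → Bool
  | .atom a  => v a
  | .top     => true
  | .bot     => false
  | .and A B => evalR v A && evalR v B
  | .or A B  => evalR v A || evalR v B
  | .imp A B => !evalR v A || evalR v B
  | .box A   => evalR v A
  | .dia A   => evalR v A

/-- Validity of a sequent with respect to a one-node semantics: under every
valuation, if all formulas of the antecedent are true then so is the succedent. -/
def SeqValid (ev : (α → Bool) → Fml α → Bool) (Γ : Multiset (Fml α)) (Δ : Option (Fml α)) :
    Prop :=
  ∀ v : α → Bool, (∀ A ∈ Γ, ev v A = true) → ∃ B ∈ Δ, ev v B = true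

/-- `CK+Ax` is T-free: every provable sequent is valid in the irreflexive node frame. -/
def TFree (Ax : Fml α → Prop) : Prop :=
  ∀ (Γ : Multiset (Fml α)) (Δ : Option (Fml α)), Derives (CKSys Ax) Γ Δ → SeqValid evalI Γ Δ

/-- `CK+Ax` is T-full: every provable sequent is valid in the reflexive node
frame and the calculus proves `⇒ □p → p` and `⇒ p → ◇p`. -/
def TFull (Ax : Fml α → Prop) : Prop :=
  (∀ (Γ : Multiset (Fml α)) (Δ : Option (Fml α)), Derives (CKSys Ax) Γ Δ → SeqValid evalR Γ Δ) ∧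
  (∀ a : α, Derives (CKSys Ax) 0 (some (.imp (.box (.atom a)) (.atom a)))) ∧
  (∀ a : α, Derives (CKSys Ax) 0 (some (.imp (.atom a) (.dia (.atom a)))))

/-- Classical validity of a (modality-free) sequent: `⋀Γ → ⋁Δ` is true under
every Boolean valuation of the atoms. -/
def ClValid (Γ : Multiset (Fml α)) (Δ : Option (Fml α)) : Prop :=
  ∀ v : α → Bool, (∀ A ∈ Γ, evalI v A = true) → ∃ B ∈ Δ, evalI v B = true

/-- Nonempty conjunctions of atoms. -/
inductive AtomConj : Fml α → Prop where
  | single (a : α) : AtomConj (.atom a)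
  | and {A B : Fml α} : AtomConj A → AtomConj B → AtomConj (.and A B)

/-- Implicational Horn formulas: `⊥`, atoms, and implications `⋀Q → r` with `Q`
a nonempty multiset of atoms and `r` an atom or `⊥`. -/
inductive ImpHorn : Fml α → Prop where
  | bot : ImpHorn (.bot : Fml α)
  | atom (a : α) : ImpHorn (.atom a)
  | impAtom {A : Fml α} (hA : AtomConj A) (a : α) : ImpHorn (.imp A (.atom a))
  | impBot {A : Fml α} (hA : AtomConj A) : ImpHorn (.imp A .bot)

/-- Formulas of the form `◇^n p` with `p` an atom and `n ≥ 0`. -/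
inductive DiaPowAtom : Fml α → Prop where
  | atom (a : α) : DiaPowAtom (.atom a)
  | dia {A : Fml α} : DiaPowAtom A → DiaPowAtom (.dia A)

/-- Nonempty conjunctions `⋀_{i=1}^k ◇^{n_i} p_i` of formulas `◇^{n_i} p_i`. -/
inductive DiaConj : Fml α → Prop where
  | single {A : Fml α} : DiaPowAtom A → DiaConj A
  | and {A B : Fml α} : DiaConj A → DiaConj B → DiaConj (.and A B)

/-- Modal Horn formulas: `⊥` and atoms, closed under `□` and under implications
`A → B` with `A = ⋀_{i=1}^k ◇^{n_i} p_i` and `B` modal Horn. -/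
inductive ModalHorn : Fml α → Prop where
  | bot : ModalHorn (.bot : Fml α)
  | atom (a : α) : ModalHorn (.atom a)
  | box {A : Fml α} : ModalHorn A → ModalHorn (.box A)
  | imp {A B : Fml α} : DiaConj A → ModalHorn B → ModalHorn (.imp A B)

/-- The predicate "all atoms of the formula satisfy `P`". -/
def Fml.AtomsIn (P : α → Prop) : Fml α → Prop
  | .atom a  => P a
  | .top     => True
  | .bot     => True
  | .and A B => A.AtomsIn P ∧ B.AtomsIn P
  | .or A B  => A.AtomsIn P ∧ B.AtomsIn P
  | .imp A B => A.AtomsIn P ∧ B.AtomsIn P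
  | .box A   => A.AtomsIn P
  | .dia A   => A.AtomsIn P

/-- No `◇` occurs in the formula. -/
def Fml.DiaFree : Fml α → Prop
  | .atom _  => True
  | .top     => True
  | .bot     => True
  | .and A B => A.DiaFree ∧ B.DiaFree
  | .or A B  => A.DiaFree ∧ B.DiaFree
  | .imp A B => A.DiaFree ∧ B.DiaFree
  | .box A   => A.DiaFree
  | .dia _   => False

/-- No `□` occurs in the formula. -/
def Fml.BoxFree : Fml α → Prop
  | .atom _  => True
  | .top     => True
  | .bot     => True
  | .and A B => A.BoxFree ∧ B.BoxFree
  | .or A B  => A.BoxFree ∧ B.BoxFree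
  | .imp A B => A.BoxFree ∧ B.BoxFree
  | .box _   => False
  | .dia A   => A.BoxFree

/-- The formula is modality-free (propositional). -/
def Fml.ModFree : Fml α → Prop
  | .atom _  => True
  | .top     => True
  | .bot     => True
  | .and A B => A.ModFree ∧ B.ModFree
  | .or A B  => A.ModFree ∧ B.ModFree
  | .imp A B => A.ModFree ∧ B.ModFree
  | .box _   => False
  | .dia _   => False

/-- An angling of the language: an injection `φ ↦ ⟨φ⟩` from formulas into the
atoms whose image (the angled atoms) is disjoint from a fixed infinite set of
plain atoms. -/
structure Angling (α : Type) where
  angle : Fml α → α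
  plain : Set α
  inj : Function.Injective angle
  plain_infinite : plain.Infinite
  disjoint : ∀ φ : Fml α, angle φ ∉ plain

/-- `a` is an angled atom. -/
def Angling.Angled (S : Angling α) (a : α) : Prop := ∃ φ : Fml α, S.angle φ = a

/-- The translation `t`: `⊥^t = ⊥`, `p^t = ⟨p⟩`, `⊤^t = ⟨⊤⟩`,
`(A ∘ B)^t = (A^t ∘ B^t) ∧ ⟨A ∘ B⟩` and `(○A)^t = (○A^t) ∧ ⟨○A⟩`. -/
def Angling.tr (S : Angling α) : Fml α → Fml α
  | .atom a  => .atom (S.angle (.atom a))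
  | .top     => .atom (S.angle .top)
  | .bot     => .bot
  | .and A B => .and (.and (S.tr A) (S.tr B)) (.atom (S.angle (.and A B)))
  | .or A B  => .and (.or (S.tr A) (S.tr B)) (.atom (S.angle (.or A B)))
  | .imp A B => .and (.imp (S.tr A) (S.tr B)) (.atom (S.angle (.imp A B)))
  | .box A   => .and (.box (S.tr A)) (.atom (S.angle (.box A)))
  | .dia A   => .and (.dia (S.tr A)) (.atom (S.angle (.dia A)))

/-- Action of the standard substitution on atoms: an angled atom `⟨φ⟩` is sent
to `φ`; plain atoms are fixed. -/
noncomputable def Angling.stdAtom (S : Angling α) (a : α) : Fml α :=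
  haveI := Classical.propDecidable (∃ φ : Fml α, S.angle φ = a)
  if h : ∃ φ : Fml α, S.angle φ = a then h.choose else .atom a

/-- The standard substitution `s`: replaces each angled atom `⟨φ⟩` by `φ`,
fixes the plain atoms, and commutes with all connectives. -/
noncomputable def Angling.std (S : Angling α) : Fml α → Fml α :=
  Fml.subst S.stdAtom

/-- The Visser–Harrop property of a calculus. -/
def VisserHarrop (R : RuleSet α) : Prop :=
  ∀ (Γ : Multiset (Fml α)), (∀ A ∈ Γ, Harrop A) →
  ∀ (AB : List (Fml α × Fml α)) (C D : Fml α),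
    Derives R (Γ + imps AB) (some (.or C D)) →
    Derives R (Γ + imps AB) (some C) ∨
    Derives R (Γ + imps AB) (some D) ∨
    ∃ p ∈ AB, Derives R (Γ + imps AB) (some p.1)

/-- The disjunction property of a calculus. -/
def DisjProp (R : RuleSet α) : Prop :=
  ∀ C D : Fml α, Derives R 0 (some (.or C D)) →
    Derives R 0 (some C) ∨ Derives R 0 (some D)

/-- The formula interpretation `I(Γ ⇒ Δ) = ⋀Γ → ⋁Δ` belongs to `L` (stated for
every enumeration of the antecedent multiset as a list). -/
def interpIn (L : Set (Fml α)) (s : Seq α) : Prop :=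
  ∀ l : List (Fml α), (↑l : Multiset (Fml α)) = s.1 → Fml.imp (conj l) (odisj s.2) ∈ L

/- Named modal axioms (with `p := atom 0`, `q := atom 1`). -/
def axTa : Fml ℕ := .imp (.box (.atom 0)) (.atom 0)
def axTb : Fml ℕ := .imp (.atom 0) (.dia (.atom 0))
def axBa : Fml ℕ := .imp (.dia (.box (.atom 0))) (.atom 0)
def axBb : Fml ℕ := .imp (.atom 0) (.box (.dia (.atom 0)))
def ax4a : Fml ℕ := .imp (.box (.atom 0)) (.box (.box (.atom 0)))
def ax4b : Fml ℕ := .imp (.dia (.dia (.atom 0))) (.dia (.atom 0))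
def ax5a : Fml ℕ := .imp (.dia (.box (.atom 0))) (.box (.atom 0))
def ax5b : Fml ℕ := .imp (.dia (.atom 0)) (.box (.dia (.atom 0)))
def axDiaBot : Fml ℕ := .imp (.dia .bot) .bot
def axDiaOr : Fml ℕ :=
  .imp (.dia (.or (.atom 0) (.atom 1))) (.or (.dia (.atom 0)) (.dia (.atom 1)))
def axBoxImp : Fml ℕ :=
  .imp (.imp (.dia (.atom 0)) (.box (.atom 1))) (.box (.imp (.atom 0) (.atom 1)))

/-- The axioms of `X ⊆ {T, B, 4, 5}` in both their `a`- and `b`-versions. -/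
def XAxioms (tT tB t4 t5 : Bool) : Set (Fml ℕ) :=
  (if tT then ({axTa, axTb} : Set (Fml ℕ)) else ∅) ∪
  (if tB then ({axBa, axBb} : Set (Fml ℕ)) else ∅) ∪
  (if t4 then ({ax4a, ax4b} : Set (Fml ℕ)) else ∅) ∪
  (if t5 then ({ax5a, ax5b} : Set (Fml ℕ)) else ∅)

/-- The additional axioms of `IK` over `CK`. -/
def IKExtra : Set (Fml ℕ) := {axDiaBot, axDiaOr, axBoxImp}

/-- The right rule with premises `{Γ, φ̄_i ⇒ ψ̄_i}_{i∈I}` and conclusion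
`Γ, θ̄ ⇒ η̄`, closed under all substitutions of formulas for atoms and
multisets for the context `Γ`. -/
def rightRuleInst (prems : List (List (Fml α) × Option (Fml α)))
    (θ : List (Fml α)) (η : Option (Fml α)) : RuleSet α := fun ps c =>
  ∃ (σ : α → Fml α) (Γ : Multiset (Fml α)),
    ps = prems.map (fun pr =>
        ((Γ + ↑(pr.1.map (Fml.subst σ)) : Multiset (Fml α)), pr.2.map (Fml.subst σ))) ∧
    c = ((Γ + ↑(θ.map (Fml.subst σ)) : Multiset (Fml α)), η.map (Fml.subst σ))

/-- The left rule with premises `{Γ, φ̄_i ⇒ ψ̄_i}_{i∈I} ∪ {Γ, θ̄_j ⇒ Δ}_{j∈J}`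
and conclusion `Γ, η̄ ⇒ Δ`, closed under all substitutions of formulas for
atoms and multisets for `Γ` and `Δ`. -/
def leftRuleInst (prems : List (List (Fml α) × Option (Fml α)))
    (lefts : List (List (Fml α))) (η : List (Fml α)) : RuleSet α := fun ps c =>
  ∃ (σ : α → Fml α) (Γ : Multiset (Fml α)) (Δ : Option (Fml α)),
    ps = prems.map (fun pr =>
          ((Γ + ↑(pr.1.map (Fml.subst σ)) : Multiset (Fml α)), pr.2.map (Fml.subst σ)))
        ++ lefts.map (fun θj => ((Γ + ↑(θj.map (Fml.subst σ)) : Multiset (Fml α)), Δ)) ∧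
    c = ((Γ + ↑(η.map (Fml.subst σ)) : Multiset (Fml α)), Δ)

/-- The formula `Ax_R` of a right rule. -/
def AxRight (prems : List (List (Fml α) × Option (Fml α)))
    (θ : List (Fml α)) (η : Option (Fml α)) : Fml α :=
  .imp (.and (conj (prems.map fun pr => .imp (conj pr.1) (odisj pr.2))) (conj θ)) (odisj η)

/-- The formula `Ax_R` of a left rule. -/
def AxLeft (prems : List (List (Fml α) × Option (Fml α)))
    (lefts : List (List (Fml α))) (η : List (Fml α)) : Fml α :=
  .imp (.and (conj (prems.map fun pr => .imp (conj pr.1) (odisj pr.2))) (conj η))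
    (disj (lefts.map conj))

/-- The forgetful translation `f_i`: fixes atoms, `⊤`, `⊥`, commutes with
`∧`, `∨`, `→`, `□`, and sends every `◇A` to `⊥`. -/
def fi : Fml α → Fml α
  | .atom a  => .atom a
  | .top     => .top
  | .bot     => .bot
  | .and A B => .and (fi A) (fi B)
  | .or A B  => .or (fi A) (fi B)
  | .imp A B => .imp (fi A) (fi B)
  | .box A   => .box (fi A)
  | .dia _   => .bot

/-- The forgetful translation `f_r`: fixes atoms, `⊤`, `⊥`, commutes with
`∧`, `∨`, `→`, `□`, and sends `◇A` to `f_r A`. -/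
def fr : Fml α → Fml α
  | .atom a  => .atom a
  | .top     => .top
  | .bot     => .bot
  | .and A B => .and (fr A) (fr B)
  | .or A B  => .or (fr A) (fr B)
  | .imp A B => .imp (fr A) (fr B)
  | .box A   => .box (fr A)
  | .dia A   => fr A

/-!
The Aczel slash relative to the context `T = Γ, {Aᵢ → Bᵢ}`: `T ∣ A` is defined so that it
implies `T ⊢ A`, is disjunctive (`T ∣ C ∨ D` gives `T ∣ C` or `T ∣ D`), and holds for every
formula of `T` once no `Aᵢ` is provable from `T` (for the Harrop formulas of `Γ` this uses
`□B ⊢ B` in the reflexive case). Every rule of `CK_□` preserves the slash. For an axiom instance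
`σ(A)` one evaluates `A` in the one-node frame under the valuation `p ↦ (T ∣ σ p)`: `A` is true
there by the frame assumption, and a true constructive formula whose instance is provable is
slashed, because slashed almost positive formulas are true (for consistent `T`) and true basic
formulas are slashed.
-/

theorem Fml.subst_subst {γ : Type} (σ : β → Fml γ) (τ : α → Fml β) (A : Fml α) :
    (A.subst τ).subst σ = A.subst fun a => (τ a).subst σ := by
  induction A <;> simp [Fml.subst, *]

@[simp]
theorem Fml.subst_atom (A : Fml α) : A.subst .atom = A := by
  induction A <;> simp [Fml.subst, *]

namespace Derives

variable {R : RuleSet α} {Γ Γ₁ Γ₂ : Multiset (Fml α)} {Δ Δ₁ Δ₂ : Option (Fml α)}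

theorem rule₀ (h : R [] (Γ, Δ)) : Derives R Γ Δ :=
  step h (by simp)

theorem rule₁ (h : R [(Γ₁, Δ₁)] (Γ, Δ)) (h₁ : Derives R Γ₁ Δ₁) : Derives R Γ Δ :=
  step h (by simpa using h₁)

theorem rule₂ (h : R [(Γ₁, Δ₁), (Γ₂, Δ₂)] (Γ, Δ)) (h₁ : Derives R Γ₁ Δ₁)
    (h₂ : Derives R Γ₂ Δ₂) : Derives R Γ Δ :=
  step h (by simp [h₁, h₂])

end Derives

namespace CKBoxSys

variable {Ax : Fml α → Prop} {Γ T : Multiset (Fml α)} {Δ : Option (Fml α)} {A B : Fml α}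

local notation "CK" => CKBoxSys Ax

theorem derives_weaken (Θ : Multiset (Fml α)) (h : Derives CK Γ Δ) : Derives CK (Θ + Γ) Δ := by
  induction Θ using Multiset.induction with
  | empty => simpa using h
  | cons A Θ ih => simpa using Derives.rule₁ (Or.inl (LJRule.wL A _ Δ)) ih

theorem derives_of_derives_add (hΓ : ∀ X ∈ Γ, Derives CK T (some X))
    (h : Derives CK (Γ + T) Δ) : Derives CK T Δ := by
  induction Γ using Multiset.induction with
  | empty => simpa using h
  | cons A Γ ih =>
    rw [Multiset.forall_mem_cons] at hΓ
    rw [Multiset.cons_add] at h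
    exact ih hΓ.2 (Derives.rule₂ (Or.inl (LJRule.cut A _ Δ)) (derives_weaken Γ hΓ.1) h)

theorem derives_of_derives_ctx (h : Derives CK Γ Δ) (hΓ : ∀ X ∈ Γ, Derives CK T (some X)) :
    Derives CK T Δ :=
  derives_of_derives_add hΓ (add_comm T Γ ▸ derives_weaken T h)

theorem derives_of_mem (hX : A ∈ T) : Derives CK T (some A) := by
  obtain ⟨T', rfl⟩ := Multiset.exists_cons_of_mem hX
  exact Derives.rule₀ (Or.inl (LJRule.id T' A))

theorem derives_top : Derives CK T (some .top) :=
  Derives.rule₀ (Or.inl (LJRule.topR T))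

theorem derives_of_derives_bot (h : Derives CK T (some .bot)) (A : Fml α) :
    Derives CK T (some A) :=
  Derives.rule₂ (Or.inl (LJRule.cut .bot T _)) h (Derives.rule₀ (Or.inl (LJRule.botL T _)))

theorem derives_and (hA : Derives CK T (some A)) (hB : Derives CK T (some B)) :
    Derives CK T (some (.and A B)) :=
  Derives.rule₂ (Or.inl (LJRule.andR A B T)) hA hB

theorem derives_left_of_derives_and (h : Derives CK T (some (.and A B))) :
    Derives CK T (some A) :=
  Derives.rule₂ (Or.inl (LJRule.cut _ T _)) h
    (Derives.rule₁ (Or.inl (LJRule.andL₁ A B T _)) (Derives.rule₀ (Or.inl (LJRule.id T A))))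

theorem derives_right_of_derives_and (h : Derives CK T (some (.and A B))) :
    Derives CK T (some B) :=
  Derives.rule₂ (Or.inl (LJRule.cut _ T _)) h
    (Derives.rule₁ (Or.inl (LJRule.andL₂ A B T _)) (Derives.rule₀ (Or.inl (LJRule.id T B))))

theorem derives_or_left (h : Derives CK T (some A)) : Derives CK T (some (.or A B)) :=
  Derives.rule₁ (Or.inl (LJRule.orR₁ A B T)) h

theorem derives_or_right (h : Derives CK T (some B)) : Derives CK T (some (.or A B)) :=
  Derives.rule₁ (Or.inl (LJRule.orR₂ A B T)) h

theorem derives_mp (h : Derives CK T (some (.imp A B))) (hA : Derives CK T (some A)) :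
    Derives CK T (some B) :=
  Derives.rule₂ (Or.inl (LJRule.cut _ T _)) h
    (Derives.rule₂ (Or.inl (LJRule.impL A B T _)) hA (Derives.rule₀ (Or.inl (LJRule.id T B))))

theorem derives_axiom (hA : Ax A) (σ : α → Fml α) : Derives CK T (some (A.subst σ)) := by
  simpa using derives_weaken T (Γ := 0) (Derives.rule₀ (Or.inr (Or.inr ⟨rfl, A, σ, hA, rfl⟩)))

theorem rule_subst (σ : α → Fml α) {ps : List (Seq α)} {c : Seq α} (h : CK ps c) :
    CK (ps.map fun p => (p.1.map (Fml.subst σ), p.2.map (Fml.subst σ)))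
      (c.1.map (Fml.subst σ), c.2.map (Fml.subst σ)) := by
  rcases h with h | ⟨Γ, A⟩ | ⟨rfl, A, τ, hA, rfl⟩
  · left
    cases h <;>
      simp only [List.map_nil, List.map_cons, Multiset.map_cons, Option.map_some, Option.map_none,
        Fml.subst] <;>
      constructor
  · right; left
    simpa [Multiset.map_map, Function.comp_def, Fml.subst] using
      KBoxRule.mk (Γ.map (Fml.subst σ)) (A.subst σ)
  · exact Or.inr (Or.inr ⟨rfl, A, fun a => (τ a).subst σ, hA, by simp [Fml.subst_subst]⟩)

theorem derives_subst (σ : α → Fml α) (h : Derives CK Γ Δ) :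
    Derives CK (Γ.map (Fml.subst σ)) (Δ.map (Fml.subst σ)) := by
  induction h with
  | step hr _ ih =>
    refine Derives.step (rule_subst σ hr) ?_
    simp only [List.mem_map]
    rintro _ ⟨p, hp, rfl⟩
    exact ih p hp

theorem derives_of_derives_box {a : α} (hT : Derives CK 0 (some (.imp (.box (.atom a)) (.atom a))))
    (h : Derives CK T (some (.box A))) : Derives CK T (some A) :=
  derives_mp (by simpa [Fml.subst] using derives_weaken T (derives_subst (fun _ => A) hT)) h

end CKBoxSys

/-- The slash `T ∣ A` of `CK_□+Ax`, in its variant that includes `T ⊢ A`; the flag `refl`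
selects the reflexive reading of `□`. -/
def Slash (Ax : Fml α → Prop) (T : Multiset (Fml α)) (refl : Bool) : Fml α → Prop
  | .atom a  => Derives (CKBoxSys Ax) T (some (.atom a))
  | .top     => True
  | .bot     => Derives (CKBoxSys Ax) T (some .bot)
  | .and A B => Slash Ax T refl A ∧ Slash Ax T refl B
  | .or A B  => Slash Ax T refl A ∨ Slash Ax T refl B
  | .imp A B =>
      (Slash Ax T refl A → Slash Ax T refl B) ∧ Derives (CKBoxSys Ax) T (some (.imp A B))
  | .box A   => (refl = true → Slash Ax T refl A) ∧ Derives (CKBoxSys Ax) T (some (.box A))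
  | .dia A   => Derives (CKBoxSys Ax) T (some (.dia A))

def nodeEval (refl : Bool) (v : α → Bool) : Fml α → Bool
  | .atom a  => v a
  | .top     => true
  | .bot     => false
  | .and A B => nodeEval refl v A && nodeEval refl v B
  | .or A B  => nodeEval refl v A || nodeEval refl v B
  | .imp A B => !nodeEval refl v A || nodeEval refl v B
  | .box A   => !refl || nodeEval refl v A
  | .dia A   => refl && nodeEval refl v A

theorem nodeEval_false : nodeEval false = (evalI : (α → Bool) → Fml α → Bool) := by
  funext v A
  induction A <;> simp [nodeEval, evalI, *]

theorem nodeEval_true : nodeEval true = (evalR : (α → Bool) → Fml α → Bool) := by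
  funext v A
  induction A <;> simp [nodeEval, evalR, *]

namespace Slash

variable {Ax : Fml α → Prop} {T : Multiset (Fml α)} {refl : Bool} {A : Fml α}

open CKBoxSys

theorem derives (h : Slash Ax T refl A) : Derives (CKBoxSys Ax) T (some A) := by
  induction A with
  | atom | bot | dia => exact h
  | top => exact derives_top
  | and A B ihA ihB => exact derives_and (ihA h.1) (ihB h.2)
  | or A B ihA ihB => exact h.elim (derives_or_left ∘ ihA) (derives_or_right ∘ ihB)
  | imp | box => exact h.2

theorem of_derives_bot (h : Derives (CKBoxSys Ax) T (some .bot)) (A : Fml α) :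
    Slash Ax T refl A := by
  induction A with
  | atom | bot | dia => exact derives_of_derives_bot h _
  | top => trivial
  | and A B ihA ihB => exact ⟨ihA, ihB⟩
  | or A B ihA _ => exact Or.inl ihA
  | imp A B _ ihB => exact ⟨fun _ => ihB, derives_of_derives_bot h _⟩
  | box A ih => exact ⟨fun _ => ih, derives_of_derives_bot h _⟩

theorem of_harrop
    (hbox : refl = true → ∀ B,
      Derives (CKBoxSys Ax) T (some (.box B)) → Derives (CKBoxSys Ax) T (some B))
    (hA : Harrop A) (h : Derives (CKBoxSys Ax) T (some A)) : Slash Ax T refl A := by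
  induction hA with
  | atom | bot => exact h
  | top => trivial
  | and _ _ ihA ihB =>
    exact ⟨ihA (derives_left_of_derives_and h), ihB (derives_right_of_derives_and h)⟩
  | box _ ih => exact ⟨fun hr => ih (hbox hr _ h), h⟩
  | imp _ _ ih => exact ⟨fun hA => ih (derives_mp h hA.derives), h⟩

variable {σ : α → Fml α} {v : α → Bool}

theorem subst_of_basic (hv : ∀ a, v a = true ↔ Slash Ax T refl (σ a)) (hA : Basic A)
    (hdf : A.DiaFree) (hev : nodeEval refl v A = true) : Slash Ax T refl (A.subst σ) := by
  induction hA with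
  | atom a => exact (hv a).1 hev
  | top => trivial
  | bot => simp [nodeEval] at hev
  | and _ _ ihA ihB =>
    simp only [nodeEval, Bool.and_eq_true] at hev
    exact ⟨ihA hdf.1 hev.1, ihB hdf.2 hev.2⟩
  | or _ _ ihA ihB =>
    simp only [nodeEval, Bool.or_eq_true] at hev
    exact hev.imp (ihA hdf.1) (ihB hdf.2)
  | dia => exact hdf.elim

theorem nodeEval_of_basic (hv : ∀ a, v a = true ↔ Slash Ax T refl (σ a))
    (hcons : ¬ Derives (CKBoxSys Ax) T (some .bot)) (hA : Basic A) (hdf : A.DiaFree)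
    (h : Slash Ax T refl (A.subst σ)) : nodeEval refl v A = true := by
  induction hA with
  | atom a => exact (hv a).2 h
  | top => rfl
  | bot => exact absurd h hcons
  | and _ _ ihA ihB =>
    simp only [nodeEval, Bool.and_eq_true]
    exact ⟨ihA hdf.1 h.1, ihB hdf.2 h.2⟩
  | or _ _ ihA ihB =>
    simp only [nodeEval, Bool.or_eq_true]
    exact h.imp (ihA hdf.1) (ihB hdf.2)
  | dia => exact hdf.elim

theorem nodeEval_of_almostPos (hv : ∀ a, v a = true ↔ Slash Ax T refl (σ a))
    (hcons : ¬ Derives (CKBoxSys Ax) T (some .bot)) (hA : AlmostPos A) (hdf : A.DiaFree)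
    (h : Slash Ax T refl (A.subst σ)) : nodeEval refl v A = true := by
  induction hA with
  | basic hA => exact nodeEval_of_basic hv hcons hA hdf h
  | and _ _ ihA ihB =>
    simp only [nodeEval, Bool.and_eq_true]
    exact ⟨ihA hdf.1 h.1, ihB hdf.2 h.2⟩
  | or _ _ ihA ihB =>
    simp only [nodeEval, Bool.or_eq_true]
    exact h.imp (ihA hdf.1) (ihB hdf.2)
  | box _ ih =>
    cases refl
    · rfl
    · exact ih hdf (h.1 rfl)
  | dia => exact hdf.elim
  | @imp A B hA _ ih =>
    simp only [nodeEval, Bool.or_eq_true, Bool.not_eq_true']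
    cases hevA : nodeEval refl v A
    · exact Or.inl rfl
    · exact Or.inr (ih hdf.2 (h.1 (subst_of_basic hv hA hdf.1 hevA)))

theorem subst_of_constructive (hv : ∀ a, v a = true ↔ Slash Ax T refl (σ a))
    (hcons : ¬ Derives (CKBoxSys Ax) T (some .bot))
    (hbox : refl = true → ∀ B,
      Derives (CKBoxSys Ax) T (some (.box B)) → Derives (CKBoxSys Ax) T (some B))
    (hA : Constructive A) (hdf : A.DiaFree) (hev : nodeEval refl v A = true)
    (h : Derives (CKBoxSys Ax) T (some (A.subst σ))) : Slash Ax T refl (A.subst σ) := by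
  induction hA with
  | basic hA => exact subst_of_basic hv hA hdf hev
  | and _ _ ihA ihB =>
    simp only [nodeEval, Bool.and_eq_true] at hev
    exact ⟨ihA hdf.1 hev.1 (derives_left_of_derives_and h),
      ihB hdf.2 hev.2 (derives_right_of_derives_and h)⟩
  | box _ ih =>
    refine ⟨fun hr => ?_, h⟩
    subst hr
    exact ih hdf hev (hbox rfl _ h)
  | imp hA _ ih =>
    refine ⟨fun hSA => ?_, h⟩
    have hevA := nodeEval_of_almostPos hv hcons hA hdf.1 hSA
    simp only [nodeEval, hevA, Bool.not_true, Bool.false_or] at hev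
    exact ih hdf.2 hev (derives_mp h hSA.derives)

end Slash

def PreservesSlash (Ax : Fml α → Prop) (T : Multiset (Fml α)) (refl : Bool) (s : Seq α) : Prop :=
  (∀ X ∈ s.1, Slash Ax T refl X) → Slash Ax T refl (odisj s.2)

section Soundness

variable {Ax : Fml α → Prop} {T : Multiset (Fml α)} {refl : Bool} {ps : List (Seq α)} {c : Seq α}

open CKBoxSys

theorem LJRule.preservesSlash (hr : LJRule ps c) (hps : ∀ p ∈ ps, PreservesSlash Ax T refl p)
    (hc : Derives (CKBoxSys Ax) c.1 c.2) : PreservesSlash Ax T refl c := by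
  cases hr <;>
    simp only [PreservesSlash, List.forall_mem_cons, List.not_mem_nil, IsEmpty.forall_iff,
      implies_true, and_true, Multiset.forall_mem_cons, and_imp, odisj] at hps ⊢
  case id => exact fun hX _ => hX
  case botL => exact fun h _ => Slash.of_derives_bot h _
  case topR => exact fun _ => trivial
  case wL => exact fun _ hΓ => hps hΓ
  case wR => exact fun hΓ => Slash.of_derives_bot (hps hΓ) _
  case cL => exact fun hA hΓ => hps hA hA hΓ
  case cut => exact fun hΓ => hps.2 (hps.1 hΓ) hΓ
  case andL₁ => exact fun hAB hΓ => hps hAB.1 hΓ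
  case andL₂ => exact fun hAB hΓ => hps hAB.2 hΓ
  case andR => exact fun hΓ => ⟨hps.1 hΓ, hps.2 hΓ⟩
  case orL => exact fun hAB hΓ => hAB.elim (hps.1 · hΓ) (hps.2 · hΓ)
  case orR₁ => exact fun hΓ => Or.inl (hps hΓ)
  case orR₂ => exact fun hΓ => Or.inr (hps hΓ)
  case impL => exact fun hAB hΓ => hps.2 (hAB.1 (hps.1 hΓ)) hΓ
  case impR =>
    exact fun hΓ => ⟨fun hA => hps hA hΓ, derives_of_derives_ctx hc fun X hX => (hΓ X hX).derives⟩

theorem KBoxRule.preservesSlash (hr : KBoxRule ps c) (hps : ∀ p ∈ ps, PreservesSlash Ax T refl p)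
    (hc : Derives (CKBoxSys Ax) c.1 c.2) : PreservesSlash Ax T refl c := by
  obtain ⟨Γ, A⟩ := hr
  simp only [PreservesSlash, List.forall_mem_cons, List.not_mem_nil, IsEmpty.forall_iff,
    implies_true, and_true, Multiset.forall_mem_map_iff, odisj] at hps ⊢
  intro hΓ
  exact ⟨fun hr => hps fun X hX => (hΓ X hX).1 hr,
    derives_of_derives_ctx hc (Multiset.forall_mem_map_iff.2 fun X hX => (hΓ X hX).derives)⟩

variable (hcons : ¬ Derives (CKBoxSys Ax) T (some .bot))
  (hbox : refl = true → ∀ B,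
    Derives (CKBoxSys Ax) T (some (.box B)) → Derives (CKBoxSys Ax) T (some B))
  (hAx : ∀ A, Ax A → Constructive A ∧ A.DiaFree)
  (hsound : ∀ Γ Δ, Derives (CKBoxSys Ax) Γ Δ → SeqValid (nodeEval refl) Γ Δ)

include hcons hbox hAx hsound in
theorem slash_subst_of_axiom {A : Fml α} (hA : Ax A) (σ : α → Fml α) :
    Slash Ax T refl (A.subst σ) := by
  classical
  let v : α → Bool := fun a => decide (Slash Ax T refl (σ a))
  have hevA : nodeEval refl v A = true := by
    obtain ⟨B, hB, hevB⟩ := hsound 0 (some A) (by simpa using derives_axiom (T := 0) hA .atom) v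
      (by simp)
    rwa [Option.mem_some_iff.1 hB]
  exact Slash.subst_of_constructive (by simp [v]) hcons hbox (hAx A hA).1 (hAx A hA).2 hevA
    (derives_axiom hA σ)

include hcons hbox hAx hsound in
theorem preservesSlash_of_derives {Θ : Multiset (Fml α)} {Δ : Option (Fml α)}
    (h : Derives (CKBoxSys Ax) Θ Δ) : PreservesSlash Ax T refl (Θ, Δ) := by
  induction h with
  | step hr hp ih =>
    rcases hr with hr | hr | ⟨rfl, A, σ, hA, rfl⟩
    · exact hr.preservesSlash ih (.step (Or.inl hr) hp)
    · exact hr.preservesSlash ih (.step (Or.inr (Or.inl hr)) hp)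
    · exact fun _ => slash_subst_of_axiom hcons hbox hAx hsound hA σ

end Soundness

theorem statement_17_general (CS : Finset (Fml ℕ)) (hCS : ∀ A ∈ CS, Constructive A ∧ A.DiaFree)
    (hTF : (∀ (Γ : Multiset (Fml ℕ)) (Δ : Option (Fml ℕ)),
              Derives (CKBoxSys (· ∈ CS)) Γ Δ → SeqValid evalI Γ Δ) ∨
           ((∀ (Γ : Multiset (Fml ℕ)) (Δ : Option (Fml ℕ)),
              Derives (CKBoxSys (· ∈ CS)) Γ Δ → SeqValid evalR Γ Δ) ∧
            (∀ n : ℕ, Derives (CKBoxSys (· ∈ CS)) 0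
              (some (.imp (.box (.atom n)) (.atom n))))))
    (Γ : Multiset (Fml ℕ)) (hΓ : ∀ A ∈ Γ, Harrop A ∧ A.DiaFree)
    (AB : List (Fml ℕ × Fml ℕ))
    (C D : Fml ℕ)
    (h : Derives (CKBoxSys (· ∈ CS)) (Γ + imps AB) (some (.or C D))) :
    Derives (CKBoxSys (· ∈ CS)) (Γ + imps AB) (some C) ∨
    Derives (CKBoxSys (· ∈ CS)) (Γ + imps AB) (some D) ∨
    ∃ p ∈ AB, Derives (CKBoxSys (· ∈ CS)) (Γ + imps AB) (some p.1) := by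
  obtain ⟨refl, hsound, hT⟩ : ∃ refl : Bool,
      (∀ Γ Δ, Derives (CKBoxSys (· ∈ CS)) Γ Δ → SeqValid (nodeEval refl) Γ Δ) ∧
      (refl = true → ∀ n : ℕ, Derives (CKBoxSys (· ∈ CS)) 0
        (some (.imp (.box (.atom n)) (.atom n)))) := by
    rcases hTF with hI | ⟨hR, hT⟩
    · exact ⟨false, by rwa [nodeEval_false], nofun⟩
    · exact ⟨true, by rwa [nodeEval_true], fun _ => hT⟩
  by_cases hcons : Derives (CKBoxSys (· ∈ CS)) (Γ + imps AB) (some .bot)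
  · exact Or.inl (CKBoxSys.derives_of_derives_bot hcons C)
  by_cases hAB : ∃ p ∈ AB, Derives (CKBoxSys (· ∈ CS)) (Γ + imps AB) (some p.1)
  · exact Or.inr (Or.inr hAB)
  have hbox (hr : refl = true) (B : Fml ℕ) :=
    CKBoxSys.derives_of_derives_box (T := Γ + imps AB) (A := B) (hT hr 0)
  have hctx : ∀ X ∈ Γ + imps AB, Slash (· ∈ CS) (Γ + imps AB) refl X := by
    intro X hX
    rcases Multiset.mem_add.1 hX with hXΓ | hXAB
    · exact Slash.of_harrop hbox (hΓ X hXΓ).1 (CKBoxSys.derives_of_mem hX)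
    · obtain ⟨p, hp, rfl⟩ := List.mem_map.1 (Multiset.mem_coe.1 hXAB)
      exact ⟨fun hp₁ => (hAB ⟨p, hp, hp₁.derives⟩).elim, CKBoxSys.derives_of_mem hX⟩
  rcases preservesSlash_of_derives hcons hbox hCS hsound h hctx with hC | hD
  · exact Or.inl hC.derives
  · exact Or.inr (Or.inl hD.derives)

/-- any T-free or T-full calculus `CK_□+𝒞` with `𝒞` a finite set
of constructive ◇-free formulas has the Visser–Harrop property (over the
◇-free fragment). -/
theorem statement_17 (CS : Finset (Fml ℕ)) (hCS : ∀ A ∈ CS, Constructive A ∧ A.DiaFree)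
    (hTF : (∀ (Γ : Multiset (Fml ℕ)) (Δ : Option (Fml ℕ)),
              Derives (CKBoxSys (· ∈ CS)) Γ Δ → SeqValid evalI Γ Δ) ∨
           ((∀ (Γ : Multiset (Fml ℕ)) (Δ : Option (Fml ℕ)),
              Derives (CKBoxSys (· ∈ CS)) Γ Δ → SeqValid evalR Γ Δ) ∧
            (∀ n : ℕ, Derives (CKBoxSys (· ∈ CS)) 0
              (some (.imp (.box (.atom n)) (.atom n))))))
    (Γ : Multiset (Fml ℕ)) (hΓ : ∀ A ∈ Γ, Harrop A ∧ A.DiaFree)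
    (AB : List (Fml ℕ × Fml ℕ)) (hAB : ∀ p ∈ AB, p.1.DiaFree ∧ p.2.DiaFree)
    (C D : Fml ℕ) (hC : C.DiaFree) (hD : D.DiaFree)
    (h : Derives (CKBoxSys (· ∈ CS)) (Γ + imps AB) (some (.or C D))) :
    Derives (CKBoxSys (· ∈ CS)) (Γ + imps AB) (some C) ∨
    Derives (CKBoxSys (· ∈ CS)) (Γ + imps AB) (some D) ∨
    ∃ p ∈ AB, Derives (CKBoxSys (· ∈ CS)) (Γ + imps AB) (some p.1) :=
  statement_17_general CS hCS hTF Γ hΓ AB C D h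

end UPT
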